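/- arXiv:1709.04187 — 3 statements merged into one kernel-verified Lean document; each statement's English description precedes it below -/
import Mathlib

section
/- Let X be a metric space equipped with a closed partial order and let μ, ν be tight Borel probability measures on X. Then the following are equivalent: (1) μ ≤ ν in the stochastic order; (2) for every monotone Borel-measurable function f : X → [0,∞], ∫ f dμ ≤ ∫ f dν (Lebesgue integrals, possibly infinite); (3) for every monotone bounded lower semicontinuous function f : X → [0,∞), ∫ f dμ ≤ ∫ f dν. -/
open MeasureTheory
open scoped ENNReal

/-- A Borel measure on a metric space is tight (inner regular) if every Borel set can be
approximated in measure from inside by compact subsets. -/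
def MeasureIsTight {X : Type*} [TopologicalSpace X] [MeasurableSpace X]
    (μ : Measure X) : Prop :=
  ∀ A : Set X, MeasurableSet A → ∀ ε : ℝ≥0∞, 0 < ε → ∃ K ⊆ A, IsCompact K ∧ μ A < μ K + ε

/-! Tightness upgrades the inequality from open upper sets to all Borel upper sets `A`: a compact
`K ⊆ A` and a compact `K' ⊆ Aᶜ` are separated by the open upper set `(lowerClosure K')ᶜ`,
whose closedness uses that the order is closed and `K'` compact. The layer-cake formula
`∫⁻ g = ∫⁻ t in Ioi 0, μ {t ≤ g}` then compares integrals of monotone functions, whose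
superlevel sets are upper sets; `ℝ≥0∞`-valued functions are reached by truncation and monotone
convergence. Conversely, indicators of open upper sets are monotone, Borel and lower
semicontinuous. -/

open Set

theorem IsCompact.isClosed_lowerClosure {X : Type*} [TopologicalSpace X] [Preorder X]
    [OrderClosedTopology X] {K : Set X} (hK : IsCompact K) :
    IsClosed (lowerClosure K : Set X) := by
  have : CompactSpace K := isCompact_iff_compactSpace.mp hK
  have hgraph : IsClosed {p : X × K | p.1 ≤ p.2} :=
    isClosed_le continuous_fst (continuous_subtype_val.comp continuous_snd)
  convert isClosedMap_fst_of_compactSpace _ hgraph using 1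
  ext x
  simp [mem_lowerClosure]

theorem IsUpperSet.monotone_indicator_one {X M : Type*} [Preorder X] [Preorder M] [Zero M]
    [One M] [ZeroLEOneClass M] {U : Set X} (hU : IsUpperSet U) :
    Monotone (U.indicator (1 : X → M)) := by
  intro a b hab
  by_cases ha : a ∈ U
  · simp [ha, hU hab ha]
  · simp only [indicator_of_notMem ha]
    exact indicator_nonneg (fun _ _ => zero_le_one) b

theorem MeasureIsTight.exists_isCompact_measure_compl_le {X : Type*} [TopologicalSpace X]
    [T2Space X] [MeasurableSpace X] [OpensMeasurableSpace X] {ν : Measure X}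
    [IsFiniteMeasure ν] (hν : MeasureIsTight ν) {A : Set X} (hA : MeasurableSet A)
    {ε : ℝ≥0∞} (hε : 0 < ε) : ∃ K ⊆ Aᶜ, IsCompact K ∧ ν Kᶜ ≤ ν A + ε := by
  obtain ⟨K, hKA, hK, hνK⟩ := hν Aᶜ hA.compl ε hε
  refine ⟨K, hKA, hK, ?_⟩
  rw [measure_compl hK.measurableSet (measure_ne_top ν K), tsub_le_iff_right]
  calc ν univ = ν A + ν Aᶜ := (measure_add_measure_compl hA).symm
    _ ≤ ν A + (ν K + ε) := by gcongr
    _ = ν A + ε + ν K := by ring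

theorem measure_le_of_isUpperSet_of_isTight {X : Type*} [TopologicalSpace X]
    [MeasurableSpace X] [OpensMeasurableSpace X] [PartialOrder X] [OrderClosedTopology X]
    {μ ν : Measure X} [IsFiniteMeasure ν] (hμ : MeasureIsTight μ) (hν : MeasureIsTight ν)
    (h : ∀ U : Set X, IsOpen U → IsUpperSet U → μ U ≤ ν U)
    {A : Set X} (hA : MeasurableSet A) (hAup : IsUpperSet A) : μ A ≤ ν A := by
  refine ENNReal.le_of_forall_pos_le_add fun ε hε _ => ?_
  have hε2 : (0 : ℝ≥0∞) < ε / 2 := ENNReal.half_pos (by exact_mod_cast hε.ne')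
  obtain ⟨K, hKA, -, hμK⟩ := hμ A hA (ε / 2) hε2
  obtain ⟨K', hK'A, hK', hνK'⟩ := hν.exists_isCompact_measure_compl_le hA hε2
  set U : Set X := (lowerClosure K' : Set X)ᶜ
  have hKU : K ⊆ U := fun x hx ⟨y, hyK', hxy⟩ => hK'A hyK' (hAup hxy (hKA hx))
  have hUK' : U ⊆ K'ᶜ := compl_subset_compl.2 subset_lowerClosure
  calc μ A ≤ μ K + ε / 2 := hμK.le
    _ ≤ μ U + ε / 2 := by gcongr
    _ ≤ ν U + ε / 2 := by
      gcongr ?_ + _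
      exact h U hK'.isClosed_lowerClosure.isOpen_compl (lowerClosure K').lower.compl
    _ ≤ ν K'ᶜ + ε / 2 := by gcongr
    _ ≤ ν A + ε / 2 + ε / 2 := by gcongr
    _ = ν A + ε := by rw [add_assoc, ENNReal.add_halves]

section Layercake

variable {X : Type*} [MeasurableSpace X] [Preorder X] {μ ν : Measure X}

theorem Monotone.lintegral_ofReal_le_of_measure_le
    (h : ∀ A, MeasurableSet A → IsUpperSet A → μ A ≤ ν A)
    {g : X → ℝ} (hg : Measurable g) (hgmono : Monotone g) (hg0 : 0 ≤ g) :
    ∫⁻ x, ENNReal.ofReal (g x) ∂μ ≤ ∫⁻ x, ENNReal.ofReal (g x) ∂ν := by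
  rw [lintegral_eq_lintegral_meas_le μ (.of_forall hg0) hg.aemeasurable,
    lintegral_eq_lintegral_meas_le ν (.of_forall hg0) hg.aemeasurable]
  exact lintegral_mono fun t => h _ (measurableSet_le measurable_const hg)
    fun a b hab ha => ha.trans (hgmono hab)

theorem Monotone.lintegral_le_of_measure_le
    (h : ∀ A, MeasurableSet A → IsUpperSet A → μ A ≤ ν A)
    {f : X → ℝ≥0∞} (hf : Measurable f) (hfmono : Monotone f) :
    ∫⁻ x, f x ∂μ ≤ ∫⁻ x, f x ∂ν := by
  have hsup : ∀ x, ⨆ n : ℕ, min (f x) n = f x := fun x => by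
    rw [← inf_iSup_eq, ENNReal.iSup_natCast, inf_top_eq]
  have htrunc : ∀ n : ℕ, ∫⁻ x, min (f x) n ∂μ ≤ ∫⁻ x, min (f x) n ∂ν := fun n => by
    have hfin : ∀ x, min (f x) n ≠ ∞ := fun x => (min_le_right _ _).trans_lt (by simp) |>.ne
    simpa only [ENNReal.ofReal_toReal (hfin _)] using
      Monotone.lintegral_ofReal_le_of_measure_le h (hf.min measurable_const).ennreal_toReal
      (fun a b hab => ENNReal.toReal_mono (hfin b) (min_le_min_right _ (hfmono hab)))
      (fun _ => ENNReal.toReal_nonneg)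
  have hmono : Monotone fun (n : ℕ) x => min (f x) n := fun m n hmn x =>
    min_le_min_left _ (by exact_mod_cast hmn)
  have hrepr : ∀ ρ : Measure X, ∫⁻ x, f x ∂ρ = ⨆ n : ℕ, ∫⁻ x, min (f x) n ∂ρ := fun ρ => by
    rw [← lintegral_iSup (fun n => hf.min measurable_const) hmono]
    simp_rw [hsup]
  rw [hrepr μ, hrepr ν]
  exact iSup_mono htrunc

theorem Monotone.integral_le_of_measure_le [IsFiniteMeasure ν]
    (h : ∀ A, MeasurableSet A → IsUpperSet A → μ A ≤ ν A)
    {g : X → ℝ} (hg : Measurable g) (hgmono : Monotone g) (hg0 : 0 ≤ g)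
    (hbdd : ∃ M, ∀ x, g x ≤ M) : ∫ x, g x ∂μ ≤ ∫ x, g x ∂ν := by
  obtain ⟨M, hM⟩ := hbdd
  have hfin : ∫⁻ x, ENNReal.ofReal (g x) ∂ν ≠ ∞ := by
    refine ((lintegral_mono fun x => ENNReal.ofReal_le_ofReal (hM x)).trans_lt ?_).ne
    rw [lintegral_const]
    exact ENNReal.mul_lt_top ENNReal.ofReal_lt_top (measure_lt_top ν univ)
  rw [integral_eq_lintegral_of_nonneg_ae (.of_forall hg0) hg.aestronglyMeasurable,
    integral_eq_lintegral_of_nonneg_ae (.of_forall hg0) hg.aestronglyMeasurable]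
  exact ENNReal.toReal_mono hfin (hgmono.lintegral_ofReal_le_of_measure_le h hg hg0)

end Layercake

/-- For tight Borel probability measures `μ, ν` on a metric space with a closed partial order,
the following are equivalent: (1) `μ ≤ ν` in the stochastic order (i.e. `μ U ≤ ν U` for every
open upper set `U`); (2) `∫⁻ f dμ ≤ ∫⁻ f dν` for every monotone Borel function
`f : X → ℝ≥0∞`; (3) `∫ f dμ ≤ ∫ f dν` for every monotone bounded lower semicontinuous
function `f : X → [0,∞)`. -/
theorem stochasticOrder_iff_lintegral_iff_integral {X : Type*} [MetricSpace X]
    [MeasurableSpace X] [BorelSpace X] [PartialOrder X]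
    (hclosed : IsClosed {p : X × X | p.1 ≤ p.2})
    (μ ν : Measure X) [IsProbabilityMeasure μ] [IsProbabilityMeasure ν]
    (hμ : MeasureIsTight μ) (hν : MeasureIsTight ν) :
    ((∀ U : Set X, IsOpen U → IsUpperSet U → μ U ≤ ν U) ↔
        (∀ f : X → ℝ≥0∞, Measurable f → Monotone f →
          ∫⁻ x, f x ∂μ ≤ ∫⁻ x, f x ∂ν)) ∧
      ((∀ U : Set X, IsOpen U → IsUpperSet U → μ U ≤ ν U) ↔
        (∀ f : X → ℝ, Monotone f → LowerSemicontinuous f → (∀ x, 0 ≤ f x) →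
          (∃ M : ℝ, ∀ x, f x ≤ M) → ∫ x, f x ∂μ ≤ ∫ x, f x ∂ν)) := by
  have : OrderClosedTopology X := ⟨hclosed⟩
  have hBorel (h : ∀ U : Set X, IsOpen U → IsUpperSet U → μ U ≤ ν U) (A : Set X)
      (hA : MeasurableSet A) (hAup : IsUpperSet A) : μ A ≤ ν A :=
    measure_le_of_isUpperSet_of_isTight hμ hν h hA hAup
  refine ⟨⟨fun h f hf hfmono => hfmono.lintegral_le_of_measure_le (hBorel h) hf,
    fun h U hU hUup => ?_⟩, ⟨fun h f hfmono hf hf0 hbdd =>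
    hfmono.integral_le_of_measure_le (hBorel h) hf.measurable hf0 hbdd, fun h U hU hUup => ?_⟩⟩
  · simpa [lintegral_indicator_one hU.measurableSet] using
      h _ (measurable_one.indicator hU.measurableSet) hUup.monotone_indicator_one
  · have hind := h _ hUup.monotone_indicator_one (hU.lowerSemicontinuous_indicator zero_le_one)
      (indicator_nonneg fun _ _ => zero_le_one)
      ⟨1, indicator_le' (fun _ _ => le_rfl) fun _ _ => zero_le_one⟩
    rw [integral_indicator_one hU.measurableSet, integral_indicator_one hU.measurableSet] at hind
    exact (ENNReal.toReal_le_toReal (measure_ne_top μ U) (measure_ne_top ν U)).1 hind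
end

section
/- Let (X,d) be a metric space equipped with a closed partial order satisfying: for all x ≤ y in X and all x₁ ∈ X there exists y₁ ∈ X with x₁ ≤ y₁ and d(y,y₁) ≤ d(x,x₁). Then for tight Borel probability measures μ, ν on X the following are equivalent: (1) μ ≤ ν in the stochastic order; (2) for every continuous bounded monotone f : X → [0,∞), ∫ f dμ ≤ ∫ f dν; (3) for every continuous bounded antitone f : X → [0,∞), ∫ f dν ≤ ∫ f dμ. -/
open MeasureTheory
open scoped ENNReal

/-!
(1) ⇒ (2) is the layer-cake formula `∫ f = ∫₀^∞ μ {f > t} dt`, each `{f > t}` being an open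
upper set. For (2) ⇒ (1), tightness reduces `μ U ≤ ν U` to the sets `upperClosure K` with `K ⊆ U`
compact, which are closed because the order is. For a closed upper set `A` the hypothesis on `d`
makes `x ↦ d(x, A)` antitone, so the thickened indicators `(1 - d(x, A) / δ)⁺` are continuous
monotone functions decreasing to the indicator of `A` as `δ → 0`. Finally (2) ⇔ (3) via
`f ↦ M - f`.
-/

open Metric BoundedContinuousFunction
open scoped NNReal

theorem IsCompact.isClosed_upperClosure {α : Type*} [TopologicalSpace α] [Preorder α]
    [OrderClosedTopology α] {K : Set α} (hK : IsCompact K) :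
    IsClosed (upperClosure K : Set α) := by
  have : CompactSpace K := isCompact_iff_compactSpace.1 hK
  have hgraph : IsClosed {p : K × α | (p.1 : α) ≤ p.2} :=
    isClosed_le (continuous_subtype_val.comp continuous_fst) continuous_snd
  convert isClosedMap_snd_of_compactSpace _ hgraph
  ext y
  simp [mem_upperClosure]

theorem MeasureIsTight.measure_le_of_forall_isCompact {X : Type*} [TopologicalSpace X]
    [MeasurableSpace X] {μ : Measure X} (hμ : MeasureIsTight μ) {A : Set X}
    (hA : MeasurableSet A) {c : ℝ≥0∞} (h : ∀ K ⊆ A, IsCompact K → μ K ≤ c) : μ A ≤ c := by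
  refine ENNReal.le_of_forall_pos_le_add fun ε hε _ => ?_
  obtain ⟨K, hKA, hK, hlt⟩ := hμ A hA ε (by exact_mod_cast hε)
  exact hlt.le.trans (by gcongr; exact h K hKA hK)

section

variable {X : Type*} [PseudoMetricSpace X] [Preorder X]

theorem antitone_infEDist_of_isUpperSet
    (hprop : ∀ x y x₁ : X, x ≤ y → ∃ y₁ : X, x₁ ≤ y₁ ∧ dist y y₁ ≤ dist x x₁)
    {A : Set X} (hA : IsUpperSet A) : Antitone (infEDist · A) := by
  intro x y hxy
  refine le_iInf₂ fun a ha => ?_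
  obtain ⟨b, hab, hdist⟩ := hprop x y a hxy
  calc infEDist y A ≤ edist y b := infEDist_le_edist_of_mem (hA hab ha)
    _ ≤ edist x a := by rw [edist_dist, edist_dist]; exact ENNReal.ofReal_le_ofReal hdist

theorem monotone_thickenedIndicator_of_isUpperSet
    (hprop : ∀ x y x₁ : X, x ≤ y → ∃ y₁ : X, x₁ ≤ y₁ ∧ dist y y₁ ≤ dist x x₁)
    {δ : ℝ} (hδ : 0 < δ) {A : Set X} (hA : IsUpperSet A) :
    Monotone (thickenedIndicator hδ A) := fun _ _ hxy =>
  ENNReal.toNNReal_mono thickenedIndicatorAux_lt_top.ne <|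
    tsub_le_tsub_left (ENNReal.div_le_div_right (antitone_infEDist_of_isUpperSet hprop hA hxy) _) 1

end

theorem Continuous.integrable_of_nonneg_of_le {X : Type*} [TopologicalSpace X]
    [MeasurableSpace X] [OpensMeasurableSpace X] {μ : Measure X} [IsFiniteMeasure μ]
    {f : X → ℝ} (hf : Continuous f) (hf_nonneg : 0 ≤ f) {M : ℝ} (hM : ∀ x, f x ≤ M) :
    Integrable f μ :=
  .of_bound hf.aestronglyMeasurable M <| .of_forall fun x => by
    rw [Real.norm_of_nonneg (hf_nonneg x)]; exact hM x

section

variable {X : Type*} [MeasurableSpace X]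

def StochasticLE [TopologicalSpace X] [Preorder X] (μ ν : Measure X) : Prop :=
  ∀ U : Set X, IsOpen U → IsUpperSet U → μ U ≤ ν U

variable [TopologicalSpace X] [OpensMeasurableSpace X] [Preorder X] {μ ν : Measure X}

theorem StochasticLE.lintegral_le_lintegral (h : StochasticLE μ ν) {f : X → ℝ}
    (hf : LowerSemicontinuous f) (hf_mono : Monotone f) (hf_nonneg : 0 ≤ f) :
    ∫⁻ x, ENNReal.ofReal (f x) ∂μ ≤ ∫⁻ x, ENNReal.ofReal (f x) ∂ν := by
  rw [lintegral_eq_lintegral_meas_lt μ (.of_forall hf_nonneg) hf.measurable.aemeasurable,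
    lintegral_eq_lintegral_meas_lt ν (.of_forall hf_nonneg) hf.measurable.aemeasurable]
  exact lintegral_mono fun t =>
    h _ (hf.isOpen_preimage t) fun _ _ hxy hx => lt_of_lt_of_le hx (hf_mono hxy)

theorem StochasticLE.integral_le_integral [IsFiniteMeasure ν] (h : StochasticLE μ ν)
    {f : X → ℝ} (hf : Continuous f) (hf_mono : Monotone f) (hf_nonneg : 0 ≤ f) {M : ℝ}
    (hM : ∀ x, f x ≤ M) : ∫ x, f x ∂μ ≤ ∫ x, f x ∂ν := by
  rw [integral_eq_lintegral_of_nonneg_ae (.of_forall hf_nonneg) hf.aestronglyMeasurable,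
    integral_eq_lintegral_of_nonneg_ae (.of_forall hf_nonneg) hf.aestronglyMeasurable]
  exact ENNReal.toReal_mono (hf.integrable_of_nonneg_of_le hf_nonneg hM).lintegral_lt_top.ne
    (h.lintegral_le_lintegral hf.lowerSemicontinuous hf_mono hf_nonneg)

end

section

variable {X : Type*} [PseudoMetricSpace X] [Preorder X] [MeasurableSpace X]
  [OpensMeasurableSpace X] {μ ν : Measure X} [IsFiniteMeasure μ] [IsFiniteMeasure ν]

theorem measure_le_of_isClosed_of_isUpperSet
    (hprop : ∀ x y x₁ : X, x ≤ y → ∃ y₁ : X, x₁ ≤ y₁ ∧ dist y y₁ ≤ dist x x₁)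
    (h : ∀ g : X →ᵇ ℝ≥0, Monotone g → ∫ x, (g x : ℝ) ∂μ ≤ ∫ x, (g x : ℝ) ∂ν)
    {A : Set X} (hA : IsClosed A) (hA_upper : IsUpperSet A) : μ A ≤ ν A := by
  have hδ : ∀ n : ℕ, (0 : ℝ) < 1 / (n + 1) := fun n => Nat.one_div_pos_of_nat
  have hδ_lim := tendsto_one_div_add_atTop_nhds_zero_nat (𝕜 := ℝ)
  refine le_of_tendsto_of_tendsto'
    (tendsto_lintegral_thickenedIndicator_of_isClosed μ hA hδ hδ_lim)
    (tendsto_lintegral_thickenedIndicator_of_isClosed ν hA hδ hδ_lim) fun n => ?_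
  set g := thickenedIndicator (hδ n) A
  rw [← ENNReal.toReal_le_toReal (lintegral_lt_top_of_nnreal μ g).ne
    (lintegral_lt_top_of_nnreal ν g).ne, toReal_lintegral_coe_eq_integral,
    toReal_lintegral_coe_eq_integral]
  exact h g (monotone_thickenedIndicator_of_isUpperSet hprop (hδ n) hA_upper)

theorem stochasticLE_of_forall_integral_le [OrderClosedTopology X]
    (hprop : ∀ x y x₁ : X, x ≤ y → ∃ y₁ : X, x₁ ≤ y₁ ∧ dist y y₁ ≤ dist x x₁)
    (hμ : MeasureIsTight μ)
    (h : ∀ g : X →ᵇ ℝ≥0, Monotone g → ∫ x, (g x : ℝ) ∂μ ≤ ∫ x, (g x : ℝ) ∂ν) :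
    StochasticLE μ ν := fun U hU hU_upper =>
  hμ.measure_le_of_forall_isCompact hU.measurableSet fun K hKU hK =>
    calc μ K ≤ μ (upperClosure K) := measure_mono subset_upperClosure
      _ ≤ ν (upperClosure K) := measure_le_of_isClosed_of_isUpperSet hprop h
          hK.isClosed_upperClosure (upperClosure K).upper
      _ ≤ ν U := measure_mono (upperClosure_min hKU hU_upper)

end

section

variable {X : Type*} [MeasurableSpace X] {μ ν : Measure X} [IsProbabilityMeasure μ]
  [IsProbabilityMeasure ν]

theorem integral_const_sub_le_integral_const_sub_iff {f : X → ℝ} (hfμ : Integrable f μ)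
    (hfν : Integrable f ν) (c : ℝ) :
    ∫ x, c - f x ∂μ ≤ ∫ x, c - f x ∂ν ↔ ∫ x, f x ∂ν ≤ ∫ x, f x ∂μ := by
  rw [integral_sub (integrable_const c) hfμ, integral_sub (integrable_const c) hfν]
  simp only [integral_const, probReal_univ, one_smul]
  constructor <;> intro <;> linarith

variable [TopologicalSpace X] [OpensMeasurableSpace X] [Preorder X]

theorem forall_monotone_integral_le_iff_forall_antitone :
    (∀ f : X → ℝ, Continuous f → Monotone f → (∀ x, 0 ≤ f x) →
        (∃ M : ℝ, ∀ x, f x ≤ M) → ∫ x, f x ∂μ ≤ ∫ x, f x ∂ν) ↔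
      (∀ f : X → ℝ, Continuous f → Antitone f → (∀ x, 0 ≤ f x) →
        (∃ M : ℝ, ∀ x, f x ≤ M) → ∫ x, f x ∂ν ≤ ∫ x, f x ∂μ) := by
  constructor
  · intro h f hf hf_anti hf_nonneg ⟨M, hM⟩
    have hf_int {κ : Measure X} [IsProbabilityMeasure κ] : Integrable f κ :=
      hf.integrable_of_nonneg_of_le hf_nonneg hM
    rw [← integral_const_sub_le_integral_const_sub_iff hf_int hf_int M]
    exact h _ (continuous_const.sub hf) (fun _ _ hxy => sub_le_sub_left (hf_anti hxy) M)
      (fun x => sub_nonneg.2 (hM x)) ⟨M, fun x => sub_le_self M (hf_nonneg x)⟩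
  · intro h f hf hf_mono hf_nonneg ⟨M, hM⟩
    have hf_int {κ : Measure X} [IsProbabilityMeasure κ] : Integrable f κ :=
      hf.integrable_of_nonneg_of_le hf_nonneg hM
    rw [← integral_const_sub_le_integral_const_sub_iff hf_int hf_int M]
    exact h _ (continuous_const.sub hf) (fun _ _ hxy => sub_le_sub_left (hf_mono hxy) M)
      (fun x => sub_nonneg.2 (hM x)) ⟨M, fun x => sub_le_self M (hf_nonneg x)⟩

end

theorem stochasticOrder_iff_continuous_monotone_iff_continuous_antitone_general {X : Type*}
    [MetricSpace X] [MeasurableSpace X] [BorelSpace X] [PartialOrder X]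
    (hclosed : IsClosed {p : X × X | p.1 ≤ p.2})
    (hprop : ∀ x y x₁ : X, x ≤ y → ∃ y₁ : X, x₁ ≤ y₁ ∧ dist y y₁ ≤ dist x x₁)
    (μ ν : Measure X) [IsProbabilityMeasure μ] [IsProbabilityMeasure ν]
    (hμ : MeasureIsTight μ) :
    ((∀ U : Set X, IsOpen U → IsUpperSet U → μ U ≤ ν U) ↔
        (∀ f : X → ℝ, Continuous f → Monotone f → (∀ x, 0 ≤ f x) →
          (∃ M : ℝ, ∀ x, f x ≤ M) → ∫ x, f x ∂μ ≤ ∫ x, f x ∂ν)) ∧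
      ((∀ U : Set X, IsOpen U → IsUpperSet U → μ U ≤ ν U) ↔
        (∀ f : X → ℝ, Continuous f → Antitone f → (∀ x, 0 ≤ f x) →
          (∃ M : ℝ, ∀ x, f x ≤ M) → ∫ x, f x ∂ν ≤ ∫ x, f x ∂μ)) := by
  have : OrderClosedTopology X := ⟨hclosed⟩
  have stochasticLE_iff_monotone : StochasticLE μ ν ↔
      ∀ f : X → ℝ, Continuous f → Monotone f → (∀ x, 0 ≤ f x) →
        (∃ M : ℝ, ∀ x, f x ≤ M) → ∫ x, f x ∂μ ≤ ∫ x, f x ∂ν :=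
    ⟨fun h _ hf hf_mono hf_nonneg ⟨_, hM⟩ => h.integral_le_integral hf hf_mono hf_nonneg hM,
      fun h => stochasticLE_of_forall_integral_le hprop hμ fun g hg =>
        h _ (NNReal.continuous_coe.comp g.continuous) (NNReal.coe_mono.comp hg)
          (fun x => (g x).2) ⟨_, fun x => NNReal.coe_le_coe.2 (NNReal.upper_bound g x)⟩⟩
  exact ⟨stochasticLE_iff_monotone,
    stochasticLE_iff_monotone.trans forall_monotone_integral_le_iff_forall_antitone⟩

/-- Let `(X,d)` be a metric space with a closed partial order such that for all `x ≤ y` and all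
`x₁` there is `y₁ ≥ x₁` with `d(y,y₁) ≤ d(x,x₁)`. Then for tight Borel probability measures
`μ, ν` the following are equivalent: (1) `μ ≤ ν` in the stochastic order; (2) for every
continuous bounded monotone `f : X → [0,∞)`, `∫ f dμ ≤ ∫ f dν`; (3) for every continuous
bounded antitone `f : X → [0,∞)`, `∫ f dν ≤ ∫ f dμ`. -/
theorem stochasticOrder_iff_continuous_monotone_iff_continuous_antitone {X : Type*}
    [MetricSpace X] [MeasurableSpace X] [BorelSpace X] [PartialOrder X]
    (hclosed : IsClosed {p : X × X | p.1 ≤ p.2})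
    (hprop : ∀ x y x₁ : X, x ≤ y → ∃ y₁ : X, x₁ ≤ y₁ ∧ dist y y₁ ≤ dist x x₁)
    (μ ν : Measure X) [IsProbabilityMeasure μ] [IsProbabilityMeasure ν]
    (hμ : MeasureIsTight μ) (hν : MeasureIsTight ν) :
    ((∀ U : Set X, IsOpen U → IsUpperSet U → μ U ≤ ν U) ↔
        (∀ f : X → ℝ, Continuous f → Monotone f → (∀ x, 0 ≤ f x) →
          (∃ M : ℝ, ∀ x, f x ≤ M) → ∫ x, f x ∂μ ≤ ∫ x, f x ∂ν)) ∧
      ((∀ U : Set X, IsOpen U → IsUpperSet U → μ U ≤ ν U) ↔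
        (∀ f : X → ℝ, Continuous f → Antitone f → (∀ x, 0 ≤ f x) →
          (∃ M : ℝ, ∀ x, f x ≤ M) → ∫ x, f x ∂ν ≤ ∫ x, f x ∂μ)) :=
  stochasticOrder_iff_continuous_monotone_iff_continuous_antitone_general hclosed hprop μ ν hμ
end

section
/- Let 𝒜 be a separable unital C*-algebra, P its set of positive invertible elements, and let μ₁, …, μₙ and ν₁, …, νₙ be tight Borel probability measures on P with μⱼ ≤ νⱼ in the stochastic order for each j = 1, …, n. Then 𝒜(μ₁,…,μₙ) ≤ 𝒜(ν₁,…,νₙ) and ℋ(μ₁,…,μₙ) ≤ ℋ(ν₁,…,νₙ) in the stochastic order. -/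
/-!
Each mean map `f` sends `Pⁿ` into `P` and is continuous and monotone on `Pⁿ` (the harmonic mean
as an antitone inversion of an arithmetic mean of antitone inversions). So for an open upper set
`U` of `P`, every section of `f⁻¹ U ∩ Pⁿ` in one coordinate is empty or an open upper set of `P`,
and `μₖ ≤ νₖ` bounds its measure. By Fubini, `μₖ` can then be replaced by `νₖ` one coordinate at
a time inside the product measure, which for the `μⱼ` is concentrated on `Pⁿ`.
-/

open MeasureTheory
open scoped ENNReal

/-- The stochastic order for Borel (probability) measures concentrated on the set
`P = {a : A | 0 ≤ a ∧ IsUnit a}` of positive invertible elements: `μ ≤ ν` iff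
`μ U ≤ ν U` for every subset `U` of `P` that is open in `P` and an upper set in `P`. -/
def StochasticOrderOnPosInv {A : Type*} [CStarAlgebra A] [PartialOrder A] [StarOrderedRing A]
    [MeasurableSpace A] (μ ν : Measure A) : Prop :=
  ∀ U : Set A, U ⊆ {a : A | 0 ≤ a ∧ IsUnit a} →
    (∃ V : Set A, IsOpen V ∧ U = V ∩ {a : A | 0 ≤ a ∧ IsUnit a}) →
    (∀ x ∈ U, ∀ y : A, 0 ≤ y → IsUnit y → x ≤ y → y ∈ U) →
    μ U ≤ ν U

/-- Tightness (inner regularity) for a Borel measure concentrated on the metric space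
`P = {a : A | 0 ≤ a ∧ IsUnit a}`: every Borel subset of `P` can be approximated in measure
from inside by compact subsets. -/
def TightOnPosInv {A : Type*} [CStarAlgebra A] [PartialOrder A] [StarOrderedRing A]
    [MeasurableSpace A] (μ : Measure A) : Prop :=
  ∀ B : Set A, B ⊆ {a : A | 0 ≤ a ∧ IsUnit a} → MeasurableSet B → ∀ ε : ℝ≥0∞, 0 < ε →
    ∃ K ⊆ B, IsCompact K ∧ μ B < μ K + ε

open Function Set
open scoped ComplexOrder

theorem measurable_fin_cons {α : Type*} [MeasurableSpace α] {n : ℕ} :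
    Measurable fun p : α × (Fin n → α) => (Fin.cons p.1 p.2 : Fin (n + 1) → α) := by
  refine measurable_pi_lambda _ fun i => ?_
  cases i using Fin.cases <;> simp only [Fin.cons_zero, Fin.cons_succ] <;> fun_prop

namespace MeasureTheory.Measure

theorem pi_fin_succ_apply {α : Type*} [MeasurableSpace α] {n : ℕ} (τ : Fin (n + 1) → Measure α)
    [∀ i, SigmaFinite (τ i)] (T : Set (Fin (n + 1) → α)) :
    Measure.pi τ T =
      ((τ 0).prod (Measure.pi fun j => τ j.succ)) ((fun p => Fin.cons p.1 p.2) ⁻¹' T) := by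
  rw [← (measurePreserving_piFinSuccAbove τ 0).symm.measure_preimage_equiv]
  congr 1 with p
  simp [MeasurableEquiv.piFinSuccAbove_symm_apply, Fin.insertNthEquiv]

theorem pi_le_pi_of_forall_update_le {α : Type*} [MeasurableSpace α] :
    ∀ {n : ℕ} (μ ν : Fin n → Measure α) [∀ i, SigmaFinite (μ i)] [∀ i, SigmaFinite (ν i)]
      {T : Set (Fin n → α)}, MeasurableSet T →
      (∀ k x, μ k {t | update x k t ∈ T} ≤ ν k {t | update x k t ∈ T}) →
      Measure.pi μ T ≤ Measure.pi ν T
  | 0, μ, ν, _, _, _, _, _ => by rw [pi_of_empty μ, pi_of_empty ν]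
  | n + 1, μ, ν, _, _, T, hT, hsec => by
    have hT' : MeasurableSet ((fun p : α × (Fin n → α) => Fin.cons p.1 p.2) ⁻¹' T) :=
      measurable_fin_cons hT
    have tail_le : ∀ t, Measure.pi (fun j => μ j.succ) {y | Fin.cons t y ∈ T} ≤
        Measure.pi (fun j => ν j.succ) {y | Fin.cons t y ∈ T} := fun t =>
      pi_le_pi_of_forall_update_le _ _ (measurable_prodMk_left hT') fun j y => by
        simpa only [Set.mem_ofPred_eq, Fin.cons_update] using hsec j.succ (Fin.cons t y)
    have head_le : ∀ y, μ 0 {t | Fin.cons t y ∈ T} ≤ ν 0 {t | Fin.cons t y ∈ T} := by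
      intro y
      rcases isEmpty_or_nonempty α with hα | ⟨⟨t₀⟩⟩
      · simp only [Set.eq_empty_of_isEmpty, measure_empty, le_refl]
      · simpa only [Fin.update_cons_zero] using hsec 0 (Fin.cons t₀ y)
    calc Measure.pi μ T
        = ∫⁻ t, Measure.pi (fun j => μ j.succ) {y | Fin.cons t y ∈ T} ∂μ 0 := by
          rw [pi_fin_succ_apply, prod_apply hT']; rfl
      _ ≤ ∫⁻ t, Measure.pi (fun j => ν j.succ) {y | Fin.cons t y ∈ T} ∂μ 0 :=
          lintegral_mono tail_le
      _ = ∫⁻ y, μ 0 {t | Fin.cons t y ∈ T} ∂Measure.pi (fun j => ν j.succ) :=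
          (prod_apply hT').symm.trans (prod_apply_symm hT')
      _ ≤ ∫⁻ y, ν 0 {t | Fin.cons t y ∈ T} ∂Measure.pi (fun j => ν j.succ) :=
          lintegral_mono head_le
      _ = Measure.pi ν T := by
          rw [pi_fin_succ_apply, prod_apply_symm hT']; rfl

end MeasureTheory.Measure

theorem isStrictlyPositive_sum {A ι : Type*} [CStarAlgebra A] [PartialOrder A] [StarOrderedRing A]
    {s : Finset ι} (hs : s.Nonempty) {a : ι → A}
    (ha : ∀ i ∈ s, IsStrictlyPositive (a i)) : IsStrictlyPositive (∑ i ∈ s, a i) :=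
  let ⟨i, hi⟩ := hs
  (ha i hi).of_le (Finset.single_le_sum (fun j hj => (ha j hj).nonneg) hi)

section RingInverse

variable {R : Type*} [NormedRing R] [HasSummableGeomSeries R]

theorem continuousOn_ringInverse : ContinuousOn (Ring.inverse : R → R) {x | IsUnit x} :=
  fun x hx => by
    simpa only [IsUnit.unit_spec] using (NormedRing.inverse_continuousAt hx.unit).continuousWithinAt

theorem measurable_ringInverse [MeasurableSpace R] [BorelSpace R] :
    Measurable (Ring.inverse : R → R) := by
  classical
  have : (Ring.inverse : R → R) = {x | IsUnit x}.piecewise Ring.inverse 0 := by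
    ext x
    by_cases hx : IsUnit x <;> simp [hx, Ring.inverse_non_unit]
  rw [this]
  exact continuousOn_ringInverse.measurable_piecewise continuousOn_const
    Units.isOpen.measurableSet

end RingInverse

section Means

variable {A : Type*} [CStarAlgebra A]

noncomputable def arithMean (n : ℕ) (a : Fin n → A) : A := (n : ℂ)⁻¹ • ∑ j, a j

noncomputable def harmMean (n : ℕ) (a : Fin n → A) : A :=
  Ring.inverse (arithMean n fun j => Ring.inverse (a j))

theorem continuous_arithMean (n : ℕ) : Continuous (arithMean (A := A) n) := by
  unfold arithMean; fun_prop

-- For separable `A` the Borel σ-algebra of `Fin n → A` is the product σ-algebra.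
theorem measurable_arithMean [TopologicalSpace.SeparableSpace A] [MeasurableSpace A]
    [BorelSpace A] (n : ℕ) : Measurable (arithMean (A := A) n) :=
  (continuous_arithMean n).measurable

theorem measurable_harmMean [TopologicalSpace.SeparableSpace A] [MeasurableSpace A]
    [BorelSpace A] (n : ℕ) : Measurable (harmMean (A := A) n) :=
  measurable_ringInverse.comp ((measurable_arithMean n).comp
    (measurable_pi_lambda _ fun j => measurable_ringInverse.comp (measurable_pi_apply j)))

variable [PartialOrder A] [StarOrderedRing A]

theorem monotone_arithMean (n : ℕ) : Monotone (arithMean (A := A) n) := fun a b hab => by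
  unfold arithMean; gcongr with j; exact hab j

theorem mapsTo_arithMean {n : ℕ} (hn : 0 < n) :
    MapsTo (arithMean (A := A) n) (univ.pi fun _ => {a | IsStrictlyPositive a})
      {a | IsStrictlyPositive a} := fun a ha =>
  (isStrictlyPositive_sum ⟨⟨0, hn⟩, Finset.mem_univ _⟩ fun j _ => ha j trivial).smul
    (by positivity)

theorem mapsTo_ringInverse_pi {n : ℕ} :
    MapsTo (fun (a : Fin n → A) j => Ring.inverse (a j))
      (univ.pi fun _ => {a | IsStrictlyPositive a}) (univ.pi fun _ => {a | IsStrictlyPositive a}) :=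
  fun _ ha j _ => (ha j trivial).ringInverse

theorem mapsTo_harmMean {n : ℕ} (hn : 0 < n) :
    MapsTo (harmMean (A := A) n) (univ.pi fun _ => {a | IsStrictlyPositive a})
      {a | IsStrictlyPositive a} := fun _ ha =>
  (mapsTo_arithMean hn (mapsTo_ringInverse_pi ha)).ringInverse

theorem monotoneOn_harmMean {n : ℕ} (hn : 0 < n) :
    MonotoneOn (harmMean (A := A) n) (univ.pi fun _ => {a | IsStrictlyPositive a}) :=
  CStarAlgebra.antitoneOn_ringInverse.comp
    ((monotone_arithMean n).comp_antitoneOn fun _ ha _ hb hab j =>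
      CStarAlgebra.antitoneOn_ringInverse (ha j trivial) (hb j trivial) (hab j))
    ((mapsTo_arithMean hn).comp mapsTo_ringInverse_pi)

theorem continuousOn_harmMean {n : ℕ} (hn : 0 < n) :
    ContinuousOn (harmMean (A := A) n) (univ.pi fun _ => {a | IsStrictlyPositive a}) :=
  continuousOn_ringInverse.comp
    ((continuous_arithMean n).comp_continuousOn
      (continuousOn_pi.2 fun j => continuousOn_ringInverse.comp (continuous_apply j).continuousOn
        fun _ ha => (ha j trivial).isUnit))
    fun _ ha => (mapsTo_arithMean hn (mapsTo_ringInverse_pi ha)).isUnit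

end Means

section StochasticOrder

variable {A : Type*} [CStarAlgebra A] [PartialOrder A]

def IsOpenUpperSetOfPosInv (U : Set A) : Prop :=
  U ⊆ {a | IsStrictlyPositive a} ∧ (∃ V : Set A, IsOpen V ∧ U = V ∩ {a | IsStrictlyPositive a}) ∧
    ∀ x ∈ U, ∀ y, IsStrictlyPositive y → x ≤ y → y ∈ U

theorem stochasticOrderOnPosInv_iff [StarOrderedRing A] [MeasurableSpace A] {μ ν : Measure A} :
    StochasticOrderOnPosInv μ ν ↔ ∀ U, IsOpenUpperSetOfPosInv U → μ U ≤ ν U :=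
  ⟨fun h U ⟨hP, hV, hup⟩ => h U hP hV fun x hx y hy₀ hy => hup x hx y ⟨hy₀, hy⟩,
    fun h U hP hV hup => h U ⟨hP, hV, fun x hx y hy => hup x hx y hy.1 hy.2⟩⟩

theorem measurableSet_isStrictlyPositive [StarOrderedRing A] [MeasurableSpace A] [BorelSpace A] :
    MeasurableSet {a : A | IsStrictlyPositive a} :=
  (isClosed_le continuous_const continuous_id).measurableSet.inter Units.isOpen.measurableSet

theorem IsOpenUpperSetOfPosInv.measurableSet [StarOrderedRing A] [MeasurableSpace A]
    [BorelSpace A] {U : Set A} (hU : IsOpenUpperSetOfPosInv U) : MeasurableSet U := by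
  obtain ⟨-, ⟨V, hV, rfl⟩, -⟩ := hU
  exact hV.measurableSet.inter measurableSet_isStrictlyPositive

theorem IsOpenUpperSetOfPosInv.inter_preimage {U : Set A} (hU : IsOpenUpperSetOfPosInv U)
    {g : A → A} (hmaps : MapsTo g {a | IsStrictlyPositive a} {a | IsStrictlyPositive a})
    (hmono : MonotoneOn g {a | IsStrictlyPositive a})
    (hcont : ContinuousOn g {a | IsStrictlyPositive a}) :
    IsOpenUpperSetOfPosInv ({a | IsStrictlyPositive a} ∩ g ⁻¹' U) := by
  obtain ⟨-, ⟨V, hV, rfl⟩, hup⟩ := hU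
  obtain ⟨W, hW, hWV⟩ := continuousOn_iff'.1 hcont V hV
  refine ⟨inter_subset_left, ⟨W, hW, ?_⟩, ?_⟩
  · rw [← hWV]
    ext t
    exact ⟨fun ⟨ht, hgt, _⟩ => ⟨hgt, ht⟩, fun ⟨hgt, ht⟩ => ⟨ht, hgt, hmaps ht⟩⟩
  · rintro t ⟨ht, hgt⟩ y hy hty
    exact ⟨hy, hup _ hgt _ (hmaps hy) (hmono ht hy hty)⟩

theorem mapsTo_update_univ_pi {ι : Type*} [DecidableEq ι] {α : ι → Type*} {s : ∀ i, Set (α i)}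
    {x : ∀ i, α i} (hx : x ∈ univ.pi s) (k : ι) : MapsTo (update x k) (s k) (univ.pi s) :=
  fun _ ht => (update_mem_pi_iff_of_mem hx).2 fun _ => ht

theorem StochasticOrderOnPosInv.measure_update_preimage_le [StarOrderedRing A]
    [MeasurableSpace A] {μ ν : Measure A} (h : StochasticOrderOnPosInv μ ν) {U : Set A}
    (hU : IsOpenUpperSetOfPosInv U) {ι : Type*} [DecidableEq ι] {f : (ι → A) → A}
    (hmaps : MapsTo f (univ.pi fun _ => {a | IsStrictlyPositive a}) {a | IsStrictlyPositive a})
    (hmono : MonotoneOn f (univ.pi fun _ => {a | IsStrictlyPositive a}))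
    (hcont : ContinuousOn f (univ.pi fun _ => {a | IsStrictlyPositive a})) (k : ι) (x : ι → A) :
    μ {t | update x k t ∈ f ⁻¹' U ∩ univ.pi fun _ => {a | IsStrictlyPositive a}} ≤
      ν {t | update x k t ∈ f ⁻¹' U ∩ univ.pi fun _ => {a | IsStrictlyPositive a}} := by
  set Pn : Set (ι → A) := univ.pi fun _ => {a | IsStrictlyPositive a}
  rcases eq_empty_or_nonempty {t | update x k t ∈ f ⁻¹' U ∩ Pn} with hempty | ⟨s, -, hs⟩
  · simp only [hempty, measure_empty, le_refl]
  -- The section only depends on the other coordinates, which `update x k s` has in `Pn`.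
  have hx : {t | update x k t ∈ f ⁻¹' U ∩ Pn} =
      {t | update (update x k s) k t ∈ f ⁻¹' U ∩ Pn} := by
    simp only [update_idem]
  rw [hx]
  generalize update x k s = x at hs
  have hsec : {t | update x k t ∈ f ⁻¹' U ∩ Pn} =
      {a | IsStrictlyPositive a} ∩ (fun t => f (update x k t)) ⁻¹' U := by
    ext t
    simp only [mem_ofPred_eq, mem_inter_iff, mem_preimage, Pn, update_mem_pi_iff_of_mem hs,
      mem_univ, forall_const, and_comm]
  have hupd := mapsTo_update_univ_pi hs k
  rw [hsec]
  exact stochasticOrderOnPosInv_iff.1 h _ <| hU.inter_preimage (hmaps.comp hupd)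
    (hmono.comp (update_mono.monotoneOn _) hupd)
    (hcont.comp (continuous_const.update k continuous_id : Continuous (update x k)).continuousOn
      hupd)

theorem StochasticOrderOnPosInv.map_pi [StarOrderedRing A] [MeasurableSpace A] [BorelSpace A]
    {n : ℕ} {μ ν : Fin n → Measure A} [∀ j, SigmaFinite (μ j)] [∀ j, SigmaFinite (ν j)]
    (hμ : ∀ j, ∀ᵐ a ∂μ j, IsStrictlyPositive a) (hle : ∀ j, StochasticOrderOnPosInv (μ j) (ν j))
    {f : (Fin n → A) → A} (hf : Measurable f)
    (hmaps : MapsTo f (univ.pi fun _ => {a | IsStrictlyPositive a}) {a | IsStrictlyPositive a})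
    (hmono : MonotoneOn f (univ.pi fun _ => {a | IsStrictlyPositive a}))
    (hcont : ContinuousOn f (univ.pi fun _ => {a | IsStrictlyPositive a})) :
    StochasticOrderOnPosInv ((Measure.pi μ).map f) ((Measure.pi ν).map f) := by
  rw [stochasticOrderOnPosInv_iff]
  intro U hU
  set Pn : Set (Fin n → A) := univ.pi fun _ => {a | IsStrictlyPositive a}
  have hT : MeasurableSet (f ⁻¹' U ∩ Pn) :=
    (hf hU.measurableSet).inter (.univ_pi fun _ => measurableSet_isStrictlyPositive)
  rw [Measure.map_apply hf hU.measurableSet, Measure.map_apply hf hU.measurableSet]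
  calc Measure.pi μ (f ⁻¹' U)
      ≤ Measure.pi μ (f ⁻¹' U ∩ Pn) := measure_mono_ae <| by
        filter_upwards [ae_all_iff.2 fun j => Measure.tendsto_eval_ae_ae (hμ j)] with x hx hxU
          using ⟨hxU, fun j _ => hx j⟩
    _ ≤ Measure.pi ν (f ⁻¹' U ∩ Pn) := Measure.pi_le_pi_of_forall_update_le μ ν hT fun k =>
        (hle k).measure_update_preimage_le hU hmaps hmono hcont k
    _ ≤ Measure.pi ν (f ⁻¹' U) := measure_mono inter_subset_left

end StochasticOrder

theorem arithmeticMean_harmonicMean_monotone_general {A : Type*} [CStarAlgebra A] [PartialOrder A]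
    [StarOrderedRing A] [TopologicalSpace.SeparableSpace A] [MeasurableSpace A] [BorelSpace A]
    (n : ℕ) (hn : 0 < n) (μ ν : Fin n → Measure A)
    (hprobμ : ∀ j, IsProbabilityMeasure (μ j)) (hprobν : ∀ j, IsProbabilityMeasure (ν j))
    (hconcμ : ∀ j, μ j {a : A | 0 ≤ a ∧ IsUnit a} = 1)
    (hle : ∀ j, StochasticOrderOnPosInv (μ j) (ν j)) :
    StochasticOrderOnPosInv
        ((Measure.pi μ).map (fun a : Fin n → A => (n : ℂ)⁻¹ • ∑ j, a j))
        ((Measure.pi ν).map (fun a : Fin n → A => (n : ℂ)⁻¹ • ∑ j, a j)) ∧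
      StochasticOrderOnPosInv
        ((Measure.pi μ).map
          (fun a : Fin n → A => Ring.inverse ((n : ℂ)⁻¹ • ∑ j, Ring.inverse (a j))))
        ((Measure.pi ν).map
          (fun a : Fin n → A => Ring.inverse ((n : ℂ)⁻¹ • ∑ j, Ring.inverse (a j)))) := by
  have hμ : ∀ j, ∀ᵐ a ∂μ j, IsStrictlyPositive a := fun j =>
    (mem_ae_iff_prob_eq_one measurableSet_isStrictlyPositive).2 (hconcμ j)
  exact ⟨.map_pi hμ hle (measurable_arithMean n) (mapsTo_arithMean hn)
      ((monotone_arithMean n).monotoneOn _) (continuous_arithMean n).continuousOn,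
    .map_pi hμ hle (measurable_harmMean n) (mapsTo_harmMean hn) (monotoneOn_harmMean hn)
      (continuousOn_harmMean hn)⟩

/-- Let `A` be a separable unital C*-algebra with its canonical order, and
`P = {a : A | 0 ≤ a ∧ IsUnit a}` its set of positive invertible elements (on which
`Ring.inverse` is the genuine inversion `a ↦ a⁻¹`). If `μ₁, …, μₙ` and `ν₁, …, νₙ` are tight
Borel probability measures on `P` with `μⱼ ≤ νⱼ` in the stochastic order for each `j`, then
`𝒜(μ₁,…,μₙ) ≤ 𝒜(ν₁,…,νₙ)` and `ℋ(μ₁,…,μₙ) ≤ ℋ(ν₁,…,νₙ)` in the stochastic order,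
where `𝒜` is the push-forward of the product measure under `(a₁,…,aₙ) ↦ (1/n)∑ aⱼ`
and `ℋ` the push-forward under `(a₁,…,aₙ) ↦ ((1/n)∑ aⱼ⁻¹)⁻¹`. -/
theorem arithmeticMean_harmonicMean_monotone {A : Type*} [CStarAlgebra A] [PartialOrder A]
    [StarOrderedRing A] [TopologicalSpace.SeparableSpace A] [MeasurableSpace A] [BorelSpace A]
    (n : ℕ) (hn : 0 < n) (μ ν : Fin n → Measure A)
    (hprobμ : ∀ j, IsProbabilityMeasure (μ j)) (hprobν : ∀ j, IsProbabilityMeasure (ν j))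
    (hconcμ : ∀ j, μ j {a : A | 0 ≤ a ∧ IsUnit a} = 1)
    (hconcν : ∀ j, ν j {a : A | 0 ≤ a ∧ IsUnit a} = 1)
    (htightμ : ∀ j, TightOnPosInv (μ j)) (htightν : ∀ j, TightOnPosInv (ν j))
    (hle : ∀ j, StochasticOrderOnPosInv (μ j) (ν j)) :
    StochasticOrderOnPosInv
        ((Measure.pi μ).map (fun a : Fin n → A => (n : ℂ)⁻¹ • ∑ j, a j))
        ((Measure.pi ν).map (fun a : Fin n → A => (n : ℂ)⁻¹ • ∑ j, a j)) ∧
      StochasticOrderOnPosInv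
        ((Measure.pi μ).map
          (fun a : Fin n → A => Ring.inverse ((n : ℂ)⁻¹ • ∑ j, Ring.inverse (a j))))
        ((Measure.pi ν).map
          (fun a : Fin n → A => Ring.inverse ((n : ℂ)⁻¹ • ∑ j, Ring.inverse (a j)))) :=
  arithmeticMean_harmonicMean_monotone_general n hn μ ν hprobμ hprobν hconcμ hle
end
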